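/- arXiv:2002.05670 — 5 statements merged into one kernel-verified Lean document; each statement's English description precedes it below -/
import Mathlib

section
/- Let X and Z be nonnegative real-valued random variables with finite means μ_X and μ_Z, and let ε > 0. Then |E[X/(ε + X + Z)] − μ_X/(ε + μ_X + μ_Z)| ≤ ((ε + μ_Z)·E[|X − μ_X|] + μ_X·E[|Z − μ_Z|]) / ε². -/
open MeasureTheory

/-! Over the common denominator, `x / (ε + x + z) - m / (ε + m + n)` has numerator
`(ε + n) (x - m) + m (n - z)` and a denominator at least `ε ^ 2`; the bound holds pointwise and
is then averaged, using `|E f - c| ≤ E |f - c|`. -/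

lemma abs_div_sub_div_le {ε x z m n : ℝ} (hε : 0 < ε) (hx : 0 ≤ x) (hz : 0 ≤ z)
    (hm : 0 ≤ m) (hn : 0 ≤ n) :
    |x / (ε + x + z) - m / (ε + m + n)| ≤ ((ε + n) * |x - m| + m * |z - n|) / ε ^ 2 := by
  have hxz : 0 < ε + x + z := by positivity
  have hmn : 0 < ε + m + n := by positivity
  have hsplit : x / (ε + x + z) - m / (ε + m + n)
      = ((ε + n) * (x - m) + m * (n - z)) / ((ε + x + z) * (ε + m + n)) := by
    field_simp
    ring
  have hnum : |(ε + n) * (x - m) + m * (n - z)| ≤ (ε + n) * |x - m| + m * |z - n| :=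
    calc |(ε + n) * (x - m) + m * (n - z)|
        ≤ |(ε + n) * (x - m)| + |m * (n - z)| := abs_add_le _ _
      _ = (ε + n) * |x - m| + m * |z - n| := by
        rw [abs_mul, abs_mul, abs_of_nonneg (by positivity : 0 ≤ ε + n), abs_of_nonneg hm,
          abs_sub_comm n z]
  have hden : ε ^ 2 ≤ (ε + x + z) * (ε + m + n) := by
    rw [sq]
    exact mul_le_mul (by linarith) (by linarith) hε.le hxz.le
  rw [hsplit, abs_div, abs_of_pos (mul_pos hxz hmn)]
  exact div_le_div₀ (by positivity) hnum (by positivity) hden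

lemma abs_integral_sub_le_integral_abs_sub {Ω : Type*} [MeasurableSpace Ω] {μ : Measure Ω}
    [IsProbabilityMeasure μ] {f : Ω → ℝ} (hf : Integrable f μ) (c : ℝ) :
    |(∫ ω, f ω ∂μ) - c| ≤ ∫ ω, |f ω - c| ∂μ := by
  simpa [integral_sub hf (integrable_const c)] using
    abs_integral_le_integral_abs (f := fun ω => f ω - c) (μ := μ)

lemma integrable_div_add_add {Ω : Type*} [MeasurableSpace Ω] {μ : Measure Ω}
    [IsFiniteMeasure μ] {X Z : Ω → ℝ} (hX : AEMeasurable X μ) (hZ : AEMeasurable Z μ)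
    (hXpos : ∀ᵐ ω ∂μ, 0 ≤ X ω) (hZpos : ∀ᵐ ω ∂μ, 0 ≤ Z ω) {ε : ℝ} (hε : 0 < ε) :
    Integrable (fun ω => X ω / (ε + X ω + Z ω)) μ := by
  refine (integrable_const (1 : ℝ)).mono'
    (hX.div ((aemeasurable_const.add hX).add hZ)).aestronglyMeasurable ?_
  filter_upwards [hXpos, hZpos] with ω hx hz
  have hpos : 0 < ε + X ω + Z ω := by positivity
  rw [Real.norm_eq_abs, abs_of_nonneg (div_nonneg hx hpos.le)]
  exact div_le_one_of_le₀ (by linarith) hpos.le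

theorem logit_expectation_bound
    {Ω : Type*} [MeasurableSpace Ω] (μ : Measure Ω) [IsProbabilityMeasure μ]
    (X Z : Ω → ℝ) (hX : Integrable X μ) (hZ : Integrable Z μ)
    (hXpos : ∀ᵐ ω ∂μ, 0 ≤ X ω) (hZpos : ∀ᵐ ω ∂μ, 0 ≤ Z ω)
    (ε : ℝ) (hε : 0 < ε)
    (μX μZ : ℝ) (hμX : μX = ∫ ω, X ω ∂μ) (hμZ : μZ = ∫ ω, Z ω ∂μ) :
    |(∫ ω, X ω / (ε + X ω + Z ω) ∂μ) - μX / (ε + μX + μZ)|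
      ≤ ((ε + μZ) * (∫ ω, |X ω - μX| ∂μ) + μX * (∫ ω, |Z ω - μZ| ∂μ)) / ε ^ 2 := by
  have hμX0 : 0 ≤ μX := hμX ▸ integral_nonneg_of_ae hXpos
  have hμZ0 : 0 ≤ μZ := hμZ ▸ integral_nonneg_of_ae hZpos
  have hXdev : Integrable (fun ω => |X ω - μX|) μ := (hX.sub (integrable_const μX)).abs
  have hZdev : Integrable (fun ω => |Z ω - μZ|) μ := (hZ.sub (integrable_const μZ)).abs
  have hfrac := integrable_div_add_add hX.aemeasurable hZ.aemeasurable hXpos hZpos hε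
  calc |(∫ ω, X ω / (ε + X ω + Z ω) ∂μ) - μX / (ε + μX + μZ)|
      ≤ ∫ ω, |X ω / (ε + X ω + Z ω) - μX / (ε + μX + μZ)| ∂μ :=
        abs_integral_sub_le_integral_abs_sub hfrac _
    _ ≤ ∫ ω, ((ε + μZ) * |X ω - μX| + μX * |Z ω - μZ|) / ε ^ 2 ∂μ := by
        refine integral_mono_ae (hfrac.sub (integrable_const _)).abs
          (((hXdev.const_mul _).add (hZdev.const_mul _)).div_const _) ?_
        filter_upwards [hXpos, hZpos] with ω hx hz
        exact abs_div_sub_div_le hε hx hz hμX0 hμZ0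
    _ = ((ε + μZ) * (∫ ω, |X ω - μX| ∂μ) + μX * (∫ ω, |Z ω - μZ| ∂μ)) / ε ^ 2 := by
        rw [integral_div, integral_add (hXdev.const_mul _) (hZdev.const_mul _),
          integral_const_mul, integral_const_mul]
end

section
/- Let Θ be a finite set and Γ a finite index set. Define V(y) = λ·Σ_γ φ_γ·log(ε_γ + Σ_θ α_γ(θ)·e^{y(θ)}·v_γ(θ)) − Σ_θ τ(θ)·ρ(θ)·y(θ) + Σ_θ τ(θ)·e^{y(θ)} on the set Y = {y : y(θ) ≤ log ρ(θ) for all θ}. Then V is strictly convex on Y. -/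
/-!
Strict convexity holds on all of `ℝ^Θ`. Each logarithmic term is a weighted log-sum-exp of `y`,
convex by Hölder's inequality `∑ eᵃˣ eᵇᶻ ≤ (∑ eˣ)ᵃ (∑ eᶻ)ᵇ`; the remaining terms split over `θ`
into the strictly convex functions `t ↦ τ eᵗ - τ ρ t`.
-/

open Finset Real

variable {Θ Γ : Type*} [Fintype Θ] [Fintype Γ]

noncomputable def V (lam : ℝ) (φ ε : Γ → ℝ) (α v : Γ → Θ → ℝ) (τ ρ : Θ → ℝ)
    (y : Θ → ℝ) : ℝ :=
  lam * ∑ γ : Γ, φ γ * Real.log (ε γ + ∑ θ : Θ, α γ θ * Real.exp (y θ) * v γ θ)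
    - ∑ θ : Θ, τ θ * ρ θ * y θ + ∑ θ : Θ, τ θ * Real.exp (y θ)

theorem ConvexOn.sum {𝕜 E β ι : Type*} [Semiring 𝕜] [PartialOrder 𝕜] [AddCommMonoid E]
    [SMul 𝕜 E] [AddCommMonoid β] [PartialOrder β] [IsOrderedAddMonoid β] [Module 𝕜 β]
    {s : Set E} {t : Finset ι} {f : ι → E → β} (hs : Convex 𝕜 s)
    (hf : ∀ i ∈ t, ConvexOn 𝕜 s (f i)) : ConvexOn 𝕜 s fun x => ∑ i ∈ t, f i x := by
  classical
  induction t using Finset.induction_on with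
  | empty => simpa using convexOn_const (0 : β) hs
  | insert i t hi ih =>
    simp only [sum_insert hi]
    exact (hf i (mem_insert_self i t)).add (ih fun j hj => hf j (mem_insert_of_mem hj))

theorem StrictConvexOn.smul_of_pos {𝕜 E β : Type*} [CommSemiring 𝕜] [PartialOrder 𝕜]
    [AddCommMonoid E] [SMul 𝕜 E] [AddCommMonoid β] [PartialOrder β] [Module 𝕜 β]
    [PosSMulStrictMono 𝕜 β] {s : Set E} {f : E → β} {c : 𝕜} (hc : 0 < c)
    (hf : StrictConvexOn 𝕜 s f) :
    StrictConvexOn 𝕜 s fun x => c • f x := by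
  refine ⟨hf.1, fun x hx y hy hxy a b ha hb hab => ?_⟩
  calc c • f (a • x + b • y) < c • (a • f x + b • f y) :=
        smul_lt_smul_of_pos_left (hf.2 hx hy hxy ha hb hab) hc
    _ = a • c • f x + b • c • f y := by rw [smul_add, smul_comm c a, smul_comm c b]

theorem strictConvexOn_univ_sum_apply {𝕜 ι : Type*} [Field 𝕜] [LinearOrder 𝕜]
    [IsStrictOrderedRing 𝕜] [Fintype ι] {f : ι → 𝕜 → 𝕜}
    (hf : ∀ i, StrictConvexOn 𝕜 Set.univ (f i)) :
    StrictConvexOn 𝕜 Set.univ fun x : ι → 𝕜 => ∑ i, f i (x i) := by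
  refine ⟨convex_univ, fun x _ y _ hxy a b ha hb hab => ?_⟩
  obtain ⟨i₀, hi₀⟩ := Function.ne_iff.1 hxy
  calc ∑ i, f i ((a • x + b • y) i) < ∑ i, (a • f i (x i) + b • f i (y i)) :=
        sum_lt_sum (fun i _ => (hf i).convexOn.2 trivial trivial ha.le hb.le hab)
          ⟨i₀, mem_univ _, (hf i₀).2 trivial trivial hi₀ ha hb hab⟩
    _ = a • ∑ i, f i (x i) + b • ∑ i, f i (y i) := by
        rw [sum_add_distrib, smul_sum, smul_sum]

theorem convexOn_log_sum_exp {ι : Type*} [Fintype ι] [Nonempty ι] :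
    ConvexOn ℝ Set.univ fun x : ι → ℝ => log (∑ i, exp (x i)) := by
  refine convexOn_iff_forall_pos.2 ⟨convex_univ, fun x _ z _ a b ha hb hab => ?_⟩
  have holder : ∑ i, exp ((a • x + b • z) i) ≤ (∑ i, exp (x i)) ^ a * (∑ i, exp (z i)) ^ b := by
    have := inner_le_Lp_mul_Lq_of_nonneg univ (holderConjugate_one_div ha hb hab)
      (f := fun i => exp (a * x i)) (g := fun i => exp (b * z i))
      (fun i _ => (exp_pos _).le) (fun i _ => (exp_pos _).le)
    simpa [← exp_add, ← exp_mul, mul_inv_cancel_right₀, mul_comm a, mul_comm b, ha.ne', hb.ne']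
      using this
  calc log (∑ i, exp ((a • x + b • z) i))
      ≤ log ((∑ i, exp (x i)) ^ a * (∑ i, exp (z i)) ^ b) :=
        log_le_log (sum_pos (fun i _ => exp_pos _) univ_nonempty) holder
    _ = a • log (∑ i, exp (x i)) + b • log (∑ i, exp (z i)) := by
        rw [log_mul (by positivity) (by positivity), log_rpow (by positivity),
          log_rpow (by positivity), smul_eq_mul, smul_eq_mul]

theorem convexOn_log_sum_mul_exp {ι : Type*} [Fintype ι] [Nonempty ι] {c : ι → ℝ}
    (hc : ∀ i, 0 < c i) :
    ConvexOn ℝ Set.univ fun x : ι → ℝ => log (∑ i, c i * exp (x i)) := by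
  have h := convexOn_log_sum_exp.translate_right (fun i => log (c i))
  simpa [Function.comp_def, exp_add, exp_log (hc _)] using h

theorem convexOn_log_add_sum_mul_exp {ι : Type*} [Fintype ι] {ε : ℝ} (hε : 0 < ε)
    {c : ι → ℝ} (hc : ∀ i, 0 < c i) :
    ConvexOn ℝ Set.univ fun x : ι → ℝ => log (ε + ∑ i, c i * exp (x i)) := by
  -- `ε` is the weight of an extra coordinate `none`, held at `0`.
  have h := (convexOn_log_sum_mul_exp (c := fun o : Option ι => o.elim ε c)
    (fun o => by cases o <;> simp [hε, hc])).comp_linearMap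
    (Function.ExtendByZero.linearMap ℝ some)
  simpa [Function.comp_def, Fintype.sum_option, (Option.some_injective ι).extend_apply] using h

theorem V_strictConvexOn_general (lam : ℝ) (φ ε : Γ → ℝ) (α v : Γ → Θ → ℝ) (τ ρ : Θ → ℝ)
    (hlam : 0 < lam) (hφ : ∀ γ, 0 < φ γ) (hε : ∀ γ, 0 < ε γ)
    (hα : ∀ γ θ, 0 < α γ θ) (hv : ∀ γ θ, 0 < v γ θ)
    (hτ : ∀ θ, 0 < τ θ) :
    StrictConvexOn ℝ {y : Θ → ℝ | ∀ θ, y θ ≤ Real.log (ρ θ)}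
      (V lam φ ε α v τ ρ) := by
  have hlog : ConvexOn ℝ Set.univ fun y : Θ → ℝ =>
      lam • ∑ γ, φ γ • log (ε γ + ∑ θ, (α γ θ * v γ θ) * exp (y θ)) :=
    (ConvexOn.sum convex_univ fun γ _ =>
      (convexOn_log_add_sum_mul_exp (hε γ) fun θ => mul_pos (hα γ θ) (hv γ θ)).smul
        (hφ γ).le).smul hlam.le
  have hsep : StrictConvexOn ℝ Set.univ fun y : Θ → ℝ =>
      ∑ θ, (τ θ • exp (y θ) - LinearMap.mulLeft ℝ (τ θ * ρ θ) (y θ)) :=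
    strictConvexOn_univ_sum_apply fun θ =>
      (strictConvexOn_exp.smul_of_pos (hτ θ)).sub_concaveOn (LinearMap.concaveOn _ convex_univ)
  refine ((hlog.add_strictConvexOn hsep).subset (Set.subset_univ _) (convex_Iic _)).congr
    fun y _ => ?_
  simp only [V, Pi.add_apply, smul_eq_mul, LinearMap.mulLeft_apply, sum_sub_distrib,
    mul_right_comm]
  ring

theorem V_strictConvexOn (lam : ℝ) (φ ε : Γ → ℝ) (α v : Γ → Θ → ℝ) (τ ρ : Θ → ℝ)
    (hlam : 0 < lam) (hφ : ∀ γ, 0 < φ γ) (hε : ∀ γ, 0 < ε γ)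
    (hα : ∀ γ θ, 0 < α γ θ) (hv : ∀ γ θ, 0 < v γ θ)
    (hτ : ∀ θ, 0 < τ θ) (hρ : ∀ θ, 0 < ρ θ) :
    StrictConvexOn ℝ {y : Θ → ℝ | ∀ θ, y θ ≤ Real.log (ρ θ)}
      (V lam φ ε α v τ ρ) :=
  V_strictConvexOn_general lam φ ε α v τ ρ hlam hφ hε hα hv hτ
end

section
/- With V defined as V(y) = λ·Σ_γ φ_γ·log(ε_γ + Σ_θ α_γ(θ)·e^{y(θ)}·v_γ(θ)) − Σ_θ τ(θ)·ρ(θ)·y(θ) + Σ_θ τ(θ)·e^{y(θ)} on Y = {y ∈ ℝ^Θ : y(θ) ≤ log ρ(θ)}, V attains a unique minimizer y* on Y. -/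
open Finset Real

variable {Θ Γ : Type*} [Fintype Θ] [Fintype Γ]

section Aux
variable {Θ : Type*} [Fintype Θ]

/-- Midpoint convexity of log of (constant + positive-combination of exponentials). -/
lemma log_midpoint_le (c : Θ → ℝ) (hc : ∀ θ, 0 < c θ) (e : ℝ) (he : 0 < e) (y z : Θ → ℝ) :
    Real.log (e + ∑ θ, c θ * Real.exp ((y θ + z θ) / 2)) ≤
      (Real.log (e + ∑ θ, c θ * Real.exp (y θ)) +
        Real.log (e + ∑ θ, c θ * Real.exp (z θ))) / 2 := by
  set A := e + ∑ θ, c θ * Real.exp (y θ) with hAdef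
  set B := e + ∑ θ, c θ * Real.exp (z θ) with hBdef
  set M := e + ∑ θ, c θ * Real.exp ((y θ + z θ) / 2) with hMdef
  have hsum : ∀ w : Θ → ℝ, (0:ℝ) ≤ ∑ θ, c θ * Real.exp (w θ) :=
    fun w => Finset.sum_nonneg fun θ _ => mul_nonneg (hc θ).le (Real.exp_pos _).le
  have hA : 0 < A := by have := hsum y; simp only [hAdef]; linarith
  have hB : 0 < B := by have := hsum z; simp only [hBdef]; linarith
  have hM : 0 < M := by have := hsum (fun θ => (y θ + z θ)/2); simp only [hMdef]; linarith
  set F : Option Θ → ℝ := fun i => i.elim (Real.sqrt e) (fun θ => Real.sqrt (c θ) * Real.exp (y θ / 2)) with hF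
  set G : Option Θ → ℝ := fun i => i.elim (Real.sqrt e) (fun θ => Real.sqrt (c θ) * Real.exp (z θ / 2)) with hG
  have hFG : M = ∑ i : Option Θ, F i * G i := by
    rw [Fintype.sum_option]
    simp only [hF, hG, Option.elim]
    rw [Real.mul_self_sqrt he.le, hMdef]
    congr 1
    refine Finset.sum_congr rfl fun θ _ => ?_
    have h1 : Real.sqrt (c θ) * Real.sqrt (c θ) = c θ := Real.mul_self_sqrt (hc θ).le
    have h2 : Real.exp (y θ / 2) * Real.exp (z θ / 2) = Real.exp ((y θ + z θ) / 2) := by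
      rw [← Real.exp_add]; ring_nf
    calc c θ * Real.exp ((y θ + z θ) / 2)
        = (Real.sqrt (c θ) * Real.sqrt (c θ)) * (Real.exp (y θ / 2) * Real.exp (z θ / 2)) := by
          rw [h1, h2]
      _ = Real.sqrt (c θ) * Real.exp (y θ / 2) * (Real.sqrt (c θ) * Real.exp (z θ / 2)) := by ring
  have hF2 : ∑ i : Option Θ, F i ^ 2 = A := by
    rw [Fintype.sum_option]
    simp only [hF, Option.elim]
    rw [Real.sq_sqrt he.le, hAdef]
    congr 1
    refine Finset.sum_congr rfl fun θ _ => ?_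
    have : Real.exp (y θ / 2) ^ 2 = Real.exp (y θ) := by
      rw [sq, ← Real.exp_add]; ring_nf
    rw [mul_pow, Real.sq_sqrt (hc θ).le, this]
  have hG2 : ∑ i : Option Θ, G i ^ 2 = B := by
    rw [Fintype.sum_option]
    simp only [hG, Option.elim]
    rw [Real.sq_sqrt he.le, hBdef]
    congr 1
    refine Finset.sum_congr rfl fun θ _ => ?_
    have : Real.exp (z θ / 2) ^ 2 = Real.exp (z θ) := by
      rw [sq, ← Real.exp_add]; ring_nf
    rw [mul_pow, Real.sq_sqrt (hc θ).le, this]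
  have hCS : M ^ 2 ≤ A * B := by
    rw [hFG, ← hF2, ← hG2]; exact Finset.sum_mul_sq_le_sq_mul_sq _ _ _
  have hlog : Real.log (M ^ 2) ≤ Real.log (A * B) :=
    Real.log_le_log (by positivity) hCS
  rw [Real.log_pow, Real.log_mul hA.ne' hB.ne'] at hlog
  push_cast at hlog
  linarith

lemma exp_midpoint_le (a b : ℝ) :
    Real.exp ((a + b) / 2) ≤ (Real.exp a + Real.exp b) / 2 := by
  have := convexOn_exp.2 (Set.mem_univ a) (Set.mem_univ b)
    (by norm_num : (0:ℝ) ≤ 1/2) (by norm_num : (0:ℝ) ≤ 1/2) (by norm_num)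
  simp only [smul_eq_mul] at this
  calc Real.exp ((a + b) / 2) = Real.exp (1/2 * a + 1/2 * b) := by ring_nf
    _ ≤ 1/2 * Real.exp a + 1/2 * Real.exp b := this
    _ = (Real.exp a + Real.exp b) / 2 := by ring

lemma exp_midpoint_lt {a b : ℝ} (hab : a ≠ b) :
    Real.exp ((a + b) / 2) < (Real.exp a + Real.exp b) / 2 := by
  have := strictConvexOn_exp.2 (Set.mem_univ a) (Set.mem_univ b) hab
    (by norm_num : (0:ℝ) < 1/2) (by norm_num : (0:ℝ) < 1/2) (by norm_num)
  simp only [smul_eq_mul] at this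
  calc Real.exp ((a + b) / 2) = Real.exp (1/2 * a + 1/2 * b) := by ring_nf
    _ < 1/2 * Real.exp a + 1/2 * Real.exp b := this
    _ = (Real.exp a + Real.exp b) / 2 := by ring

lemma sum_exp_midpoint_lt (τ : Θ → ℝ) (hτ : ∀ θ, 0 < τ θ) {y z : Θ → ℝ} (hne : y ≠ z) :
    ∑ θ, τ θ * Real.exp ((y θ + z θ) / 2) <
      ((∑ θ, τ θ * Real.exp (y θ)) + ∑ θ, τ θ * Real.exp (z θ)) / 2 := by
  obtain ⟨θ₀, hθ₀⟩ := Function.ne_iff.mp hne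
  have : ((∑ θ, τ θ * Real.exp (y θ)) + ∑ θ, τ θ * Real.exp (z θ)) / 2
      = ∑ θ, τ θ * ((Real.exp (y θ) + Real.exp (z θ)) / 2) := by
    rw [← Finset.sum_add_distrib, Finset.sum_div]
    refine Finset.sum_congr rfl fun θ _ => by ring
  rw [this]
  refine Finset.sum_lt_sum (fun θ _ => ?_) ⟨θ₀, Finset.mem_univ θ₀, ?_⟩
  · exact mul_le_mul_of_nonneg_left (exp_midpoint_le _ _) (hτ θ).le
  · exact mul_lt_mul_of_pos_left (exp_midpoint_lt hθ₀) (hτ θ₀)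

end Aux

lemma V_midpoint_lt (lam : ℝ) (φ ε : Γ → ℝ) (α v : Γ → Θ → ℝ) (τ ρ : Θ → ℝ)
    (hlam : 0 < lam) (hφ : ∀ γ, 0 < φ γ) (hε : ∀ γ, 0 < ε γ)
    (hα : ∀ γ θ, 0 < α γ θ) (hv : ∀ γ θ, 0 < v γ θ) (hτ : ∀ θ, 0 < τ θ)
    {y z : Θ → ℝ} (hne : y ≠ z) :
    V lam φ ε α v τ ρ (fun θ => (y θ + z θ) / 2) <
      (V lam φ ε α v τ ρ y + V lam φ ε α v τ ρ z) / 2 := by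
  have hrw : ∀ (w : Θ → ℝ) (γ : Γ), ∑ θ, α γ θ * Real.exp (w θ) * v γ θ
      = ∑ θ, (α γ θ * v γ θ) * Real.exp (w θ) :=
    fun w γ => Finset.sum_congr rfl fun θ _ => by ring
  have h1 : ∀ γ : Γ, Real.log (ε γ + ∑ θ, α γ θ * Real.exp ((y θ + z θ) / 2) * v γ θ)
      ≤ (Real.log (ε γ + ∑ θ, α γ θ * Real.exp (y θ) * v γ θ)
        + Real.log (ε γ + ∑ θ, α γ θ * Real.exp (z θ) * v γ θ)) / 2 := by
    intro γ
    rw [hrw _ γ, hrw _ γ, hrw _ γ]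
    exact log_midpoint_le (fun θ => α γ θ * v γ θ)
      (fun θ => mul_pos (hα γ θ) (hv γ θ)) (ε γ) (hε γ) y z
  have hT1 : ∑ γ, φ γ * Real.log (ε γ + ∑ θ, α γ θ * Real.exp ((y θ + z θ) / 2) * v γ θ)
      ≤ ((∑ γ, φ γ * Real.log (ε γ + ∑ θ, α γ θ * Real.exp (y θ) * v γ θ))
        + ∑ γ, φ γ * Real.log (ε γ + ∑ θ, α γ θ * Real.exp (z θ) * v γ θ)) / 2 := by
    rw [← Finset.sum_add_distrib, Finset.sum_div]
    refine Finset.sum_le_sum fun γ _ => ?_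
    have := mul_le_mul_of_nonneg_left (h1 γ) (hφ γ).le
    calc φ γ * Real.log (ε γ + ∑ θ, α γ θ * Real.exp ((y θ + z θ) / 2) * v γ θ)
        ≤ φ γ * ((Real.log (ε γ + ∑ θ, α γ θ * Real.exp (y θ) * v γ θ)
          + Real.log (ε γ + ∑ θ, α γ θ * Real.exp (z θ) * v γ θ)) / 2) := this
      _ = (φ γ * Real.log (ε γ + ∑ θ, α γ θ * Real.exp (y θ) * v γ θ)
          + φ γ * Real.log (ε γ + ∑ θ, α γ θ * Real.exp (z θ) * v γ θ)) / 2 := by ring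
  have hT2 : ∑ θ, τ θ * ρ θ * ((y θ + z θ) / 2)
      = ((∑ θ, τ θ * ρ θ * y θ) + ∑ θ, τ θ * ρ θ * z θ) / 2 := by
    rw [← Finset.sum_add_distrib, Finset.sum_div]
    exact Finset.sum_congr rfl fun θ _ => by ring
  have hT3 := sum_exp_midpoint_lt τ hτ hne
  have hT1' := mul_le_mul_of_nonneg_left hT1 hlam.le
  unfold V
  simp only
  rw [hT2]
  linarith [hT1', hT3]

theorem V_unique_minimizer (lam : ℝ) (φ ε : Γ → ℝ) (α v : Γ → Θ → ℝ) (τ ρ : Θ → ℝ)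
    (hlam : 0 < lam) (hφ : ∀ γ, 0 < φ γ) (hε : ∀ γ, 0 < ε γ)
    (hα : ∀ γ θ, 0 < α γ θ) (hv : ∀ γ θ, 0 < v γ θ)
    (hτ : ∀ θ, 0 < τ θ) (hρ : ∀ θ, 0 < ρ θ) :
    ∃! y : Θ → ℝ, (∀ θ, y θ ≤ Real.log (ρ θ)) ∧
      ∀ z : Θ → ℝ, (∀ θ, z θ ≤ Real.log (ρ θ)) →
        V lam φ ε α v τ ρ y ≤ V lam φ ε α v τ ρ z := by
  classical
  set W := V lam φ ε α v τ ρ with hW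
  have harg : ∀ (w : Θ → ℝ) (γ : Γ), 0 < ε γ + ∑ θ, α γ θ * Real.exp (w θ) * v γ θ :=
    fun w γ => add_pos_of_pos_of_nonneg (hε γ) (Finset.sum_nonneg fun θ _ =>
      mul_nonneg (mul_nonneg (hα γ θ).le (Real.exp_pos _).le) (hv γ θ).le)
  have hcont : Continuous W := by
    rw [hW]; unfold V
    refine Continuous.add (Continuous.sub (continuous_const.mul ?_) ?_) ?_
    · refine continuous_finset_sum _ fun γ _ => continuous_const.mul ?_
      exact Continuous.log (continuous_const.add (continuous_finset_sum _ fun θ _ =>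
        (continuous_const.mul (Real.continuous_exp.comp (continuous_apply θ))).mul
          continuous_const)) (fun x => (harg x γ).ne')
    · exact continuous_finset_sum _ fun θ _ => continuous_const.mul (continuous_apply θ)
    · exact continuous_finset_sum _ fun θ _ =>
        continuous_const.mul (Real.continuous_exp.comp (continuous_apply θ))
  set y₀ : Θ → ℝ := fun θ => Real.log (ρ θ) with hy₀
  set C₀ : ℝ := lam * ∑ γ, φ γ * Real.log (ε γ) with hC₀
  set Mc : ℝ := ∑ θ, τ θ * ρ θ * |Real.log (ρ θ)| with hMc
  -- lower bound for V
  have hlow : ∀ w : Θ → ℝ, C₀ - ∑ θ, τ θ * ρ θ * w θ ≤ W w := by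
    intro w
    have hT1 : ∑ γ, φ γ * Real.log (ε γ) ≤
        ∑ γ, φ γ * Real.log (ε γ + ∑ θ, α γ θ * Real.exp (w θ) * v γ θ) := by
      refine Finset.sum_le_sum fun γ _ => mul_le_mul_of_nonneg_left ?_ (hφ γ).le
      refine Real.log_le_log (hε γ) (le_add_of_nonneg_right ?_)
      exact Finset.sum_nonneg fun θ _ =>
        mul_nonneg (mul_nonneg (hα γ θ).le (Real.exp_pos _).le) (hv γ θ).le
    have hT1' := mul_le_mul_of_nonneg_left hT1 hlam.le
    have hT3 : (0:ℝ) ≤ ∑ θ, τ θ * Real.exp (w θ) :=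
      Finset.sum_nonneg fun θ _ => mul_nonneg (hτ θ).le (Real.exp_pos _).le
    rw [hW]; unfold V
    linarith [hC₀]
  -- coordinatewise lower bound on sublevel set
  set m : Θ → ℝ := fun θ => min ((C₀ - Mc - W y₀) / (τ θ * ρ θ)) (Real.log (ρ θ)) with hm
  have hcoord : ∀ w : Θ → ℝ, (∀ θ, w θ ≤ Real.log (ρ θ)) → W w ≤ W y₀ →
      ∀ θ', m θ' ≤ w θ' := by
    intro w hwS hwlev θ'
    have hsplit : τ θ' * ρ θ' * w θ' + ∑ θ ∈ Finset.univ.erase θ', τ θ * ρ θ * w θ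
        = ∑ θ, τ θ * ρ θ * w θ := Finset.add_sum_erase _ (fun θ => τ θ * ρ θ * w θ) (Finset.mem_univ θ')
    have herase : ∑ θ ∈ Finset.univ.erase θ', τ θ * ρ θ * w θ ≤ Mc := by
      have step1 : ∑ θ ∈ Finset.univ.erase θ', τ θ * ρ θ * w θ
          ≤ ∑ θ ∈ Finset.univ.erase θ', τ θ * ρ θ * |Real.log (ρ θ)| := by
        refine Finset.sum_le_sum fun θ _ => ?_
        exact mul_le_mul_of_nonneg_left ((hwS θ).trans (le_abs_self _))
          (mul_pos (hτ θ) (hρ θ)).le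
      refine step1.trans ?_
      rw [hMc]
      refine Finset.sum_le_sum_of_subset_of_nonneg (Finset.subset_univ _) fun θ _ _ => ?_
      exact mul_nonneg (mul_pos (hτ θ) (hρ θ)).le (abs_nonneg _)
    have hkey : C₀ - Mc - W y₀ ≤ τ θ' * ρ θ' * w θ' := by
      have := hlow w
      linarith [hsplit, herase, hwlev]
    have hpos : 0 < τ θ' * ρ θ' := mul_pos (hτ θ') (hρ θ')
    have : (C₀ - Mc - W y₀) / (τ θ' * ρ θ') ≤ w θ' := by
      rw [div_le_iff₀ hpos]; linarith [hkey]
    exact le_trans (min_le_left _ _) this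
  -- compact box
  set B : Set (Θ → ℝ) := Set.univ.pi fun θ => Set.Icc (m θ) (Real.log (ρ θ)) with hB
  have hBc : IsCompact B := isCompact_univ_pi fun θ => isCompact_Icc
  have hy₀B : y₀ ∈ B := fun θ _ => ⟨min_le_right _ _, le_refl _⟩
  obtain ⟨ystar, hyB, hminB⟩ := hBc.exists_isMinOn ⟨y₀, hy₀B⟩ hcont.continuousOn
  have hystarS : ∀ θ, ystar θ ≤ Real.log (ρ θ) := fun θ => (hyB θ (Set.mem_univ θ)).2
  have hylev : W ystar ≤ W y₀ := hminB hy₀B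
  have hminS : ∀ z : Θ → ℝ, (∀ θ, z θ ≤ Real.log (ρ θ)) → W ystar ≤ W z := by
    intro z hz
    by_contra h
    push_neg at h
    have hzlev : W z ≤ W y₀ := le_trans h.le hylev
    have hzB : z ∈ B := fun θ _ => ⟨hcoord z hz hzlev θ, hz θ⟩
    exact absurd (hminB hzB) (not_le.mpr h)
  refine ⟨ystar, ⟨hystarS, hminS⟩, ?_⟩
  rintro w ⟨hwS, hwmin⟩
  by_contra hne
  have h1 : W w ≤ W ystar := hwmin ystar hystarS
  have h2 : W ystar ≤ W w := hminS w hwS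
  have huS : ∀ θ, (w θ + ystar θ) / 2 ≤ Real.log (ρ θ) := fun θ => by
    have := hwS θ; have := hystarS θ; linarith
  have hmid := V_midpoint_lt lam φ ε α v τ ρ hlam hφ hε hα hv hτ hne
  rw [← hW] at hmid
  have h3 : W w ≤ W (fun θ => (w θ + ystar θ) / 2) := hwmin _ huS
  linarith
end

section
/- Let f : ℝ^Θ → ℝ^Θ have components f_θ(s) = (ρ(θ) − s(θ))τ(θ) − λ·Σ_γ φ_γ·(α_γ(θ)v_γ(θ)s(θ))/(ε_γ + Σ_{θ'} α_γ(θ')s(θ')v_γ(θ')). Then for any initial condition ŝ ∈ S = {s : 0 ≤ s(θ) ≤ ρ(θ) for all θ}, the ODE ds_t/dt = f(s_t) with s_0 = ŝ has a unique solution {s_t : t ≥ 0} remaining in S. -/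
open Finset Real

variable {Θ Γ : Type*} [Fintype Θ] [Fintype Γ]

noncomputable def odeF (lam : ℝ) (φ ε : Γ → ℝ) (α v : Γ → Θ → ℝ) (τ ρ : Θ → ℝ)
    (s : Θ → ℝ) (θ : Θ) : ℝ :=
  (ρ θ - s θ) * τ θ
    - lam * ∑ γ : Γ, φ γ * (α γ θ * v γ θ * s θ /
        (ε γ + ∑ θ' : Θ, α γ θ' * s θ' * v γ θ'))

/-!
The denominators in `f` are at least `ε γ` on the box `S = [0, ρ]`, so `f` is smooth near the
compact convex set `S`, hence Lipschitz and bounded there. Composing `f` with the coordinatewise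
clamp onto `S` gives a bounded, globally Lipschitz field, whose solution exists for all times by
Picard–Lindelöf. This field points into `S`: where `s θ ≤ 0` its `θ`-component is
`ρ θ * τ θ ≥ 0`, and where `s θ ≥ ρ θ` it is `-λ ∑ … ≤ 0`. So the solution started in `S` stays
in `S` for `t ≥ 0`, where it solves the original equation; uniqueness is Grönwall's inequality
for `f` on `S`.
-/

open scoped NNReal Topology

section AutonomousODE

variable {E : Type*} [NormedAddCommGroup E] [NormedSpace ℝ E] {F : E → E} {K L : ℝ≥0}

theorem LipschitzWith.exists_eq_forall_abs_lt_hasDerivAt_of_norm_le [CompleteSpace E]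
    (hF : LipschitzWith K F) (hL : ∀ x, ‖F x‖ ≤ L) (x₀ : E) (T : ℝ≥0) :
    ∃ g : ℝ → E, g 0 = x₀ ∧ ∀ t : ℝ, |t| < T → HasDerivAt g (F (g t)) t := by
  have hpl : IsPicardLindelof (fun _ ↦ F) (tmin := -T) (tmax := T) ⟨0, by simp⟩ x₀ (L * T) 0
      L K :=
    .of_time_independent (fun x _ ↦ hL x) hF.lipschitzOnWith (by simp)
  obtain ⟨g, hg0, hg⟩ := hpl.exists_eq_forall_mem_Icc_hasDerivWithinAt₀
  refine ⟨g, hg0, fun t ht ↦ ?_⟩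
  obtain ⟨hTt, htT⟩ := abs_lt.1 ht
  exact (hg t ⟨hTt.le, htT.le⟩).hasDerivAt (Icc_mem_nhds hTt htT)

theorem LipschitzWith.exists_eq_forall_hasDerivAt_of_norm_le [CompleteSpace E]
    (hF : LipschitzWith K F) (hL : ∀ x, ‖F x‖ ≤ L) (x₀ : E) :
    ∃ g : ℝ → E, g 0 = x₀ ∧ ∀ t, HasDerivAt g (F (g t)) t := by
  choose sol hsol0 hsol using hF.exists_eq_forall_abs_lt_hasDerivAt_of_norm_le hL x₀
  have hagree : ∀ T T' : ℝ≥0, ∀ t : ℝ, |t| < T → |t| < T' → sol T t = sol T' t := by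
    intro T T' t hT hT'
    have hsub : ∀ r ∈ Set.Ioo (-min (T : ℝ) T') (min (T : ℝ) T'), |r| < T ∧ |r| < T' :=
      fun r hr ↦ lt_min_iff.1 (abs_lt.2 hr)
    refine ODE_solution_unique_of_mem_Ioo (v := fun _ ↦ F) (s := fun _ ↦ Set.univ)
      (fun _ _ ↦ hF.lipschitzOnWith) (t₀ := 0) (by simp [hT.trans_le', hT'.trans_le'])
      (fun r hr ↦ ⟨hsol T r (hsub r hr).1, trivial⟩)
      (fun r hr ↦ ⟨hsol T' r (hsub r hr).2, trivial⟩)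
      (by rw [hsol0, hsol0]) (abs_lt.1 (lt_min hT hT'))
  refine ⟨fun t ↦ sol (‖t‖₊ + 1) t, hsol0 _, fun t ↦ ?_⟩
  have ht : |t| < ((‖t‖₊ + 1 : ℝ≥0) : ℝ) := by simp
  have hlocal : (fun r ↦ sol (‖r‖₊ + 1) r) =ᶠ[𝓝 t] sol (‖t‖₊ + 1) := by
    filter_upwards [(continuous_abs.tendsto t).eventually (gt_mem_nhds ht)] with r hr
    exact hagree _ _ r (by simp) hr
  exact (hsol _ t ht).congr_of_eventuallyEq hlocal

theorem eqOn_Ici_of_hasDerivAt_of_lipschitzOnWith {s : Set E} {g₁ g₂ : ℝ → E}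
    (hF : LipschitzOnWith K F s)
    (hg₁ : ∀ t ≥ 0, g₁ t ∈ s ∧ HasDerivAt g₁ (F (g₁ t)) t)
    (hg₂ : ∀ t ≥ 0, g₂ t ∈ s ∧ HasDerivAt g₂ (F (g₂ t)) t) (h0 : g₁ 0 = g₂ 0) :
    Set.EqOn g₁ g₂ (Set.Ici 0) := fun t ht ↦
  ODE_solution_unique_of_mem_Icc_right (v := fun _ ↦ F) (s := fun _ ↦ s) (b := t)
    (fun _ _ ↦ hF)
    (fun r hr ↦ (hg₁ r hr.1).2.continuousAt.continuousWithinAt)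
    (fun r hr ↦ (hg₁ r hr.1).2.hasDerivWithinAt) (fun r hr ↦ (hg₁ r hr.1).1)
    (fun r hr ↦ (hg₂ r hr.1).2.continuousAt.continuousWithinAt)
    (fun r hr ↦ (hg₂ r hr.1).2.hasDerivWithinAt) (fun r hr ↦ (hg₂ r hr.1).1) h0
    ⟨ht, le_rfl⟩

end AutonomousODE

section ForwardInvariance

theorem le_of_hasDerivAt_of_nonpos_of_le {x x' : ℝ → ℝ} {c t : ℝ}
    (hx : ∀ r, HasDerivAt x (x' r) r) (h0 : x 0 ≤ c) (hx' : ∀ r, 0 ≤ r → c ≤ x r → x' r ≤ 0)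
    (ht : 0 ≤ t) : x t ≤ c := by
  refine le_of_forall_pos_le_add fun δ hδ ↦ ?_
  set k := δ / (t + 1)
  have hk : 0 < k := by positivity
  -- the comparison lemma needs strict inequality on the boundary: compare with `c + k (r + 1)`
  have hB : ∀ r, HasDerivAt (fun r ↦ c + k * (r + 1)) k r := fun r ↦ by
    simpa using ((hasDerivAt_id r).add_const 1).const_mul k |>.const_add c
  have hle := image_le_of_deriv_right_lt_deriv_boundary (a := 0) (b := t)
    (fun r _ ↦ (hx r).continuousAt.continuousWithinAt) (fun r _ ↦ (hx r).hasDerivWithinAt)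
    (by linarith) hB (fun r hr hxr ↦ (hx' r hr.1 (by nlinarith [hr.1])).trans_lt hk) ⟨ht, le_rfl⟩
  rwa [div_mul_cancel₀ δ (by positivity)] at hle

theorem mem_Icc_of_hasDerivAt_of_inward {ι : Type*} {a b : ι → ℝ} {G : (ι → ℝ) → ι → ℝ}
    {g : ℝ → ι → ℝ}
    (hG_lower : ∀ s i, s i ≤ a i → 0 ≤ G s i) (hG_upper : ∀ s i, b i ≤ s i → G s i ≤ 0)
    (hg : ∀ t, HasDerivAt g (G (g t)) t) (h0 : g 0 ∈ Set.Icc a b) {t : ℝ} (ht : 0 ≤ t) :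
    g t ∈ Set.Icc a b := by
  refine ⟨fun i ↦ ?_, fun i ↦ ?_⟩
  · have := le_of_hasDerivAt_of_nonpos_of_le (x := fun r ↦ -g r i)
      (fun r ↦ (hasDerivAt_pi.1 (hg r) i).neg) (neg_le_neg (h0.1 i))
      (fun r _ hr ↦ neg_nonpos.2 (hG_lower _ _ (le_of_neg_le_neg hr))) ht
    exact le_of_neg_le_neg this
  · exact le_of_hasDerivAt_of_nonpos_of_le (fun r ↦ hasDerivAt_pi.1 (hg r) i) (h0.2 i)
      (fun r _ hr ↦ hG_upper _ _ hr) ht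

end ForwardInvariance

section Clamp

variable {ι : Type*} {a b s : ι → ℝ}

theorem mem_Icc_zero_iff {ρ : ι → ℝ} : s ∈ Set.Icc 0 ρ ↔ ∀ i, 0 ≤ s i ∧ s i ≤ ρ i := by
  simp only [Set.mem_Icc, Pi.le_def, Pi.zero_apply, forall_and]

def clampBox (a b s : ι → ℝ) : ι → ℝ := a ⊔ (s ⊓ b)

theorem clampBox_mem (hab : a ≤ b) : clampBox a b s ∈ Set.Icc a b :=
  ⟨le_sup_left, sup_le hab inf_le_right⟩

theorem clampBox_eq_self (hs : s ∈ Set.Icc a b) : clampBox a b s = s := by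
  rw [clampBox, inf_eq_left.2 hs.2, sup_eq_right.2 hs.1]

theorem clampBox_apply_of_le_left {i : ι} (h : s i ≤ a i) : clampBox a b s i = a i :=
  max_eq_left ((min_le_left _ _).trans h)

theorem clampBox_apply_of_le_right {i : ι} (hab : a i ≤ b i) (h : b i ≤ s i) :
    clampBox a b s i = b i := by
  simp only [clampBox, Pi.sup_apply, Pi.inf_apply, inf_eq_right.2 h, sup_eq_right.2 hab]

theorem lipschitzWith_clampBox [Fintype ι] (a b : ι → ℝ) : LipschitzWith 1 (clampBox a b) := by
  refine LipschitzWith.of_dist_le_mul fun s s' ↦ ?_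
  rw [NNReal.coe_one, one_mul, dist_pi_le_iff dist_nonneg]
  intro i
  calc dist (clampBox a b s i) (clampBox a b s' i) ≤ 1 * dist (s i) (s' i) :=
        ((LipschitzWith.id.min_const (b i)).const_max (a i)).dist_le_mul (s i) (s' i)
    _ ≤ dist s s' := by simpa using dist_le_pi_dist s s' i

end Clamp

section Model

variable {lam : ℝ} {φ ε : Γ → ℝ} {α v : Γ → Θ → ℝ} {τ ρ s : Θ → ℝ}

omit [Fintype Γ] in
theorem odeF_denom_pos (hε : ∀ γ, 0 < ε γ) (hα : ∀ γ θ, 0 ≤ α γ θ) (hv : ∀ γ θ, 0 ≤ v γ θ)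
    (hs : 0 ≤ s) (γ : Γ) : 0 < ε γ + ∑ θ, α γ θ * s θ * v γ θ :=
  add_pos_of_pos_of_nonneg (hε γ) <|
    sum_nonneg fun θ _ ↦ mul_nonneg (mul_nonneg (hα γ θ) (hs θ)) (hv γ θ)

theorem contDiffAt_odeF (hden : ∀ γ, ε γ + ∑ θ, α γ θ * s θ * v γ θ ≠ 0) :
    ContDiffAt ℝ 1 (odeF lam φ ε α v τ ρ) s := by
  refine contDiffAt_pi.2 fun θ ↦ ?_
  unfold odeF
  fun_prop (disch := exact hden _)

theorem exists_lipschitzOnWith_odeF (hε : ∀ γ, 0 < ε γ) (hα : ∀ γ θ, 0 ≤ α γ θ)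
    (hv : ∀ γ θ, 0 ≤ v γ θ) :
    ∃ K, LipschitzOnWith K (odeF lam φ ε α v τ ρ) (Set.Icc 0 ρ) :=
  ContDiffOn.exists_lipschitzOnWith
    (fun _ hs ↦ (contDiffAt_odeF fun γ ↦ (odeF_denom_pos hε hα hv hs.1 γ).ne').contDiffWithinAt)
    one_ne_zero (convex_Icc 0 ρ) isCompact_Icc

theorem odeF_nonneg_of_apply_eq_zero {θ : Θ} (hτ : 0 ≤ τ θ) (hρ : 0 ≤ ρ θ) (hs : s θ = 0) :
    0 ≤ odeF lam φ ε α v τ ρ s θ := by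
  simp only [odeF, hs, sub_zero, mul_zero, zero_div, sum_const_zero]
  positivity

theorem odeF_nonpos_of_apply_eq {θ : Θ} (hlam : 0 ≤ lam) (hφ : ∀ γ, 0 ≤ φ γ)
    (hε : ∀ γ, 0 < ε γ) (hα : ∀ γ θ, 0 ≤ α γ θ) (hv : ∀ γ θ, 0 ≤ v γ θ) (hs : 0 ≤ s)
    (hsθ : s θ = ρ θ) : odeF lam φ ε α v τ ρ s θ ≤ 0 := by
  rw [odeF, hsθ, sub_self, zero_mul, zero_sub, neg_nonpos]
  refine mul_nonneg hlam (sum_nonneg fun γ _ ↦ mul_nonneg (hφ γ) (div_nonneg ?_ ?_))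
  · exact mul_nonneg (mul_nonneg (hα γ θ) (hv γ θ)) (hsθ ▸ hs θ)
  · exact (odeF_denom_pos hε hα hv hs γ).le

end Model

theorem ode_exists_unique (lam : ℝ) (φ ε : Γ → ℝ) (α v : Γ → Θ → ℝ) (τ ρ : Θ → ℝ)
    (hlam : 0 < lam) (hφ : ∀ γ, 0 < φ γ) (hε : ∀ γ, 0 < ε γ)
    (hα : ∀ γ θ, 0 < α γ θ) (hv : ∀ γ θ, 0 < v γ θ)
    (hτ : ∀ θ, 0 < τ θ) (hρ : ∀ θ, 0 < ρ θ)
    (shat : Θ → ℝ) (hshat : ∀ θ, 0 ≤ shat θ ∧ shat θ ≤ ρ θ) :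
    (∃ s : ℝ → Θ → ℝ, s 0 = shat ∧
        ∀ t ∈ Set.Ici (0 : ℝ), (∀ θ, 0 ≤ s t θ ∧ s t θ ≤ ρ θ) ∧
          HasDerivAt s (fun θ => odeF lam φ ε α v τ ρ (s t) θ) t) ∧
    ∀ s₁ s₂ : ℝ → Θ → ℝ,
      (s₁ 0 = shat ∧ ∀ t ∈ Set.Ici (0 : ℝ), (∀ θ, 0 ≤ s₁ t θ ∧ s₁ t θ ≤ ρ θ) ∧
        HasDerivAt s₁ (fun θ => odeF lam φ ε α v τ ρ (s₁ t) θ) t) →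
      (s₂ 0 = shat ∧ ∀ t ∈ Set.Ici (0 : ℝ), (∀ θ, 0 ≤ s₂ t θ ∧ s₂ t θ ≤ ρ θ) ∧
        HasDerivAt s₂ (fun θ => odeF lam φ ε α v τ ρ (s₂ t) θ) t) →
      ∀ t ∈ Set.Ici (0 : ℝ), s₁ t = s₂ t := by
  have hα' : ∀ γ θ, 0 ≤ α γ θ := fun γ θ ↦ (hα γ θ).le
  have hv' : ∀ γ θ, 0 ≤ v γ θ := fun γ θ ↦ (hv γ θ).le
  have hρ' : 0 ≤ ρ := fun θ ↦ (hρ θ).le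
  set f := odeF lam φ ε α v τ ρ
  obtain ⟨K, hf_lip⟩ : ∃ K, LipschitzOnWith K f (Set.Icc 0 ρ) :=
    exists_lipschitzOnWith_odeF hε hα' hv'
  obtain ⟨C, hf_bdd⟩ := isCompact_Icc.exists_bound_of_continuousOn hf_lip.continuousOn
  have hF_lip : LipschitzWith (K * 1) (f ∘ clampBox 0 ρ) := lipschitzOnWith_univ.1 <|
    hf_lip.comp (lipschitzWith_clampBox 0 ρ).lipschitzOnWith fun s _ ↦ clampBox_mem hρ'
  obtain ⟨g, hg0, hg⟩ := hF_lip.exists_eq_forall_hasDerivAt_of_norm_le (L := C.toNNReal)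
    (fun s ↦ (hf_bdd _ (clampBox_mem hρ')).trans (le_coe_toNNReal C)) shat
  have hg_mem : ∀ t ≥ 0, g t ∈ Set.Icc 0 ρ := fun t ↦ mem_Icc_of_hasDerivAt_of_inward
    (fun s θ hs ↦ odeF_nonneg_of_apply_eq_zero (hτ θ).le (hρ θ).le
      (clampBox_apply_of_le_left hs))
    (fun s θ hs ↦ odeF_nonpos_of_apply_eq hlam.le (fun γ ↦ (hφ γ).le) hε hα' hv'
      (clampBox_mem hρ').1 (clampBox_apply_of_le_right (hρ θ).le hs))
    hg (hg0 ▸ mem_Icc_zero_iff.2 hshat)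
  have hsol : ∀ t ≥ 0, g t ∈ Set.Icc 0 ρ ∧ HasDerivAt g (f (g t)) t := fun t ht ↦
    ⟨hg_mem t ht, by simpa [clampBox_eq_self (hg_mem t ht)] using hg t⟩
  refine ⟨⟨g, hg0, fun t ht ↦ ⟨mem_Icc_zero_iff.1 (hsol t ht).1, (hsol t ht).2⟩⟩, ?_⟩
  rintro s₁ s₂ ⟨h₁0, h₁⟩ ⟨h₂0, h₂⟩
  exact eqOn_Ici_of_hasDerivAt_of_lipschitzOnWith hf_lip
    (fun t ht ↦ ⟨mem_Icc_zero_iff.2 (h₁ t ht).1, (h₁ t ht).2⟩)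
    (fun t ht ↦ ⟨mem_Icc_zero_iff.2 (h₂ t ht).1, (h₂ t ht).2⟩) (h₁0.trans h₂0.symm)
end

section
/- Along a trajectory s_t of the ODE ds_t(θ)/dt = f_θ(s_t) with s_t(θ) > 0 for all θ, setting y_t(θ) = log s_t(θ), the derivative of the Lyapunov function satisfies d/dt V(y_t) = −Σ_θ (1/s_t(θ))·(∂V(y_t)/∂y(θ))², where ∂V/∂y(θ) = Σ_γ λφ_γα_γ(θ)e^{y(θ)}v_γ(θ)/(ε_γ + Σ_{θ'}α_γ(θ')e^{y(θ')}v_γ(θ')) − τ(θ)ρ(θ) + τ(θ)e^{y(θ)}. In particular, d/dt V(y_t) ≤ 0, with equality iff ∂V(y_t)/∂y(θ) = 0 for all θ. -/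
/-!
Write `y_t = log s_t`. By the chain rule `d/dt V(y_t) = ∑_θ ∂V/∂y(θ) · ẏ_t(θ)` with
`ẏ_t(θ) = f_θ(s_t) / s_t(θ)`, and since `e^{y_t} = s_t` the vector field is minus the gradient,
`f_θ(s_t) = -∂V(y_t)/∂y(θ)`. Hence `d/dt V(y_t) = -∑_θ (∂V/∂y(θ))² / s_t(θ)`, a sum of squares
with positive weights.
-/

open Finset Real

variable {Θ Γ : Type*} [Fintype Θ] [Fintype Γ]

/-- The partial derivative ∂V/∂y(θ). -/
noncomputable def Vgrad (lam : ℝ) (φ ε : Γ → ℝ) (α v : Γ → Θ → ℝ) (τ ρ : Θ → ℝ)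
    (y : Θ → ℝ) (θ : Θ) : ℝ :=
  ∑ γ : Γ, lam * φ γ * α γ θ * Real.exp (y θ) * v γ θ /
      (ε γ + ∑ θ' : Θ, α γ θ' * Real.exp (y θ') * v γ θ')
    - τ θ * ρ θ + τ θ * Real.exp (y θ)

theorem Finset.sum_mul_sq_eq_zero_iff {ι : Type*} [Fintype ι] {w g : ι → ℝ}
    (hw : ∀ i, 0 < w i) : ∑ i, w i * g i ^ 2 = 0 ↔ ∀ i, g i = 0 := by
  rw [sum_eq_zero_iff_of_nonneg fun i _ => mul_nonneg (hw i).le (sq_nonneg _)]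
  simp [(hw _).ne']

section Lyapunov

variable {lam : ℝ} {φ ε : Γ → ℝ} {α v : Γ → Θ → ℝ} {τ ρ : Θ → ℝ}

theorem sum_Vgrad_mul (y y' : Θ → ℝ) :
    ∑ θ, Vgrad lam φ ε α v τ ρ y θ * y' θ =
      lam * ∑ γ, φ γ * ((∑ θ, α γ θ * (exp (y θ) * y' θ) * v γ θ) /
          (ε γ + ∑ θ, α γ θ * exp (y θ) * v γ θ))
        - ∑ θ, τ θ * ρ θ * y' θ + ∑ θ, τ θ * (exp (y θ) * y' θ) := by
  simp only [Vgrad, add_mul, sub_mul, sum_add_distrib, sum_sub_distrib, sum_mul, mul_sum,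
    sum_div]
  rw [sum_comm]
  congr 2
  · exact sum_congr rfl fun γ _ => sum_congr rfl fun θ _ => by ring
  · ext θ; ring

theorem hasDerivAt_V_comp {y : ℝ → Θ → ℝ} {y' : Θ → ℝ} {t : ℝ} (hy : HasDerivAt y y' t)
    (hD : ∀ γ, ε γ + ∑ θ, α γ θ * exp (y t θ) * v γ θ ≠ 0) :
    HasDerivAt (fun u => V lam φ ε α v τ ρ (y u))
      (∑ θ, Vgrad lam φ ε α v τ ρ (y t) θ * y' θ) t := by
  have hyθ : ∀ θ, HasDerivAt (fun u => y u θ) (y' θ) t := hasDerivAt_pi.mp hy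
  have hexp : ∀ θ, HasDerivAt (fun u => exp (y u θ)) (exp (y t θ) * y' θ) t :=
    fun θ => (hyθ θ).exp
  have hden : ∀ γ, HasDerivAt (fun u => ε γ + ∑ θ, α γ θ * exp (y u θ) * v γ θ)
      (∑ θ, α γ θ * (exp (y t θ) * y' θ) * v γ θ) t := fun γ =>
    (HasDerivAt.fun_sum fun θ _ => ((hexp θ).const_mul (α γ θ)).mul_const (v γ θ)).const_add _
  have hlog := (HasDerivAt.fun_sum (u := univ) fun γ _ =>
    ((hden γ).log (hD γ)).const_mul (φ γ)).const_mul lam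
  have hlin := HasDerivAt.fun_sum (u := univ) fun θ _ => (hyθ θ).const_mul (τ θ * ρ θ)
  have hτexp := HasDerivAt.fun_sum (u := univ) fun θ _ => (hexp θ).const_mul (τ θ)
  rw [sum_Vgrad_mul]
  exact (hlog.sub hlin).add hτexp

theorem odeF_eq_neg_Vgrad_log {s : Θ → ℝ} (hs : ∀ θ, 0 < s θ) (θ : Θ) :
    odeF lam φ ε α v τ ρ s θ = -Vgrad lam φ ε α v τ ρ (fun θ' => log (s θ')) θ := by
  simp only [odeF, Vgrad, fun θ' => exp_log (hs θ'), mul_sum]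
  ring_nf

end Lyapunov

theorem lyapunov_derivative_general (lam : ℝ) (φ ε : Γ → ℝ) (α v : Γ → Θ → ℝ) (τ ρ : Θ → ℝ)
    (hε : ∀ γ, 0 < ε γ)
    (hα : ∀ γ θ, 0 < α γ θ) (hv : ∀ γ θ, 0 < v γ θ)
    (s : ℝ → Θ → ℝ) (t : ℝ)
    (hpos : ∀ u : ℝ, ∀ θ, 0 < s u θ)
    (hderiv : ∀ u : ℝ, HasDerivAt s (fun θ => odeF lam φ ε α v τ ρ (s u) θ) u) :
    HasDerivAt (fun u : ℝ => V lam φ ε α v τ ρ (fun θ => Real.log (s u θ)))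
      (-∑ θ : Θ, (1 / s t θ) *
        (Vgrad lam φ ε α v τ ρ (fun θ' => Real.log (s t θ')) θ) ^ 2) t ∧
    (-∑ θ : Θ, (1 / s t θ) *
        (Vgrad lam φ ε α v τ ρ (fun θ' => Real.log (s t θ')) θ) ^ 2) ≤ 0 ∧
    ((-∑ θ : Θ, (1 / s t θ) *
        (Vgrad lam φ ε α v τ ρ (fun θ' => Real.log (s t θ')) θ) ^ 2) = 0 ↔
      ∀ θ, Vgrad lam φ ε α v τ ρ (fun θ' => Real.log (s t θ')) θ = 0) := by
  have hlog : HasDerivAt (fun u θ => log (s u θ))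
      (fun θ => odeF lam φ ε α v τ ρ (s t) θ / s t θ) t :=
    hasDerivAt_pi.mpr fun θ => (hasDerivAt_pi.mp (hderiv t) θ).log (hpos t θ).ne'
  have hden : ∀ γ, ε γ + ∑ θ, α γ θ * exp (log (s t θ)) * v γ θ ≠ 0 := fun γ =>
    (add_pos_of_pos_of_nonneg (hε γ) (sum_nonneg fun θ _ =>
      (mul_pos (mul_pos (hα γ θ) (exp_pos _)) (hv γ θ)).le)).ne'
  have hweight : ∀ θ, 0 < 1 / s t θ := fun θ => one_div_pos.mpr (hpos t θ)
  refine ⟨(hasDerivAt_V_comp hlog hden).congr_deriv ?_, ?_, ?_⟩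
  · rw [← sum_neg_distrib]
    refine sum_congr rfl fun θ _ => ?_
    rw [odeF_eq_neg_Vgrad_log (hpos t)]
    ring
  · exact neg_nonpos.mpr (sum_nonneg fun θ _ => mul_nonneg (hweight θ).le (sq_nonneg _))
  · exact neg_eq_zero.trans (sum_mul_sq_eq_zero_iff hweight)

theorem lyapunov_derivative (lam : ℝ) (φ ε : Γ → ℝ) (α v : Γ → Θ → ℝ) (τ ρ : Θ → ℝ)
    (hlam : 0 < lam) (hφ : ∀ γ, 0 < φ γ) (hε : ∀ γ, 0 < ε γ)
    (hα : ∀ γ θ, 0 < α γ θ) (hv : ∀ γ θ, 0 < v γ θ)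
    (hτ : ∀ θ, 0 < τ θ) (hρ : ∀ θ, 0 < ρ θ)
    (s : ℝ → Θ → ℝ) (t : ℝ)
    (hpos : ∀ u : ℝ, ∀ θ, 0 < s u θ)
    (hderiv : ∀ u : ℝ, HasDerivAt s (fun θ => odeF lam φ ε α v τ ρ (s u) θ) u) :
    HasDerivAt (fun u : ℝ => V lam φ ε α v τ ρ (fun θ => Real.log (s u θ)))
      (-∑ θ : Θ, (1 / s t θ) *
        (Vgrad lam φ ε α v τ ρ (fun θ' => Real.log (s t θ')) θ) ^ 2) t ∧
    (-∑ θ : Θ, (1 / s t θ) *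
        (Vgrad lam φ ε α v τ ρ (fun θ' => Real.log (s t θ')) θ) ^ 2) ≤ 0 ∧
    ((-∑ θ : Θ, (1 / s t θ) *
        (Vgrad lam φ ε α v τ ρ (fun θ' => Real.log (s t θ')) θ) ^ 2) = 0 ↔
      ∀ θ, Vgrad lam φ ε α v τ ρ (fun θ' => Real.log (s t θ')) θ = 0) :=
  lyapunov_derivative_general lam φ ε α v τ ρ hε hα hv s t hpos hderiv
end
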